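/- arXiv:0708.4006 — 2 statements merged into one kernel-verified Lean document; each statement's English description precedes it below -/
import Mathlib

section
/- Let k be a field, G a finite group, and β a normalized 3-cocycle on G with values in kˣ. Let Φ := Σ_{g,h,l ∈ G} β(g,h,l)⁻¹ ⟨g,e⟩ ⊗ ⟨h,e⟩ ⊗ ⟨l,e⟩ in the threefold tensor product algebra D^β(k[G])^{⊗3}. Then Δ is quasi-coassociative with associator Φ: for every a ∈ D^β(k[G]), ((id ⊗ Δ) ∘ Δ)(a) · Φ = Φ · ((Δ ⊗ id) ∘ Δ)(a). -/
/-!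
Evaluated at `⟨g₁,x₁⟩⊗⟨g₂,x₂⟩⊗⟨g₃,x₃⟩`, both sides vanish unless `x₁ = x₂ = x₃ =: x`, and
multiplying by `Φ`, which lives on the elements `⟨g,e⟩`, only rescales by a value of `β⁻¹`
(the twists `θ_g(e,y)`, `θ_g(x,e)` are trivial). What remains is
`γ_x(g₁,g₂g₃) γ_x(g₂,g₃) β(g₁ˣ,g₂ˣ,g₃ˣ)⁻¹ = β(g₁,g₂,g₃)⁻¹ γ_x(g₁,g₂) γ_x(g₁g₂,g₃)`
with `gˣ = x⁻¹gx`: the coboundary of `γ_x` is `β` against its conjugate by `x`, which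
follows from four instances of the cocycle identity.
-/

open scoped BigOperators TensorProduct

namespace StringyOrbifold

/-- A normalized 3-cocycle on `G` with values in `kˣ`. -/
def IsNormalized3Cocycle {k G : Type*} [Field k] [Group G] (β : G → G → G → kˣ) : Prop :=
  (∀ g h l m : G, β g h l * β g (h * l) m * β h l m = β (g * h) l m * β g h (l * m)) ∧
  (∀ g h : G, β 1 g h = 1 ∧ β g 1 h = 1 ∧ β g h 1 = 1)

/-- A normalized 2-cocycle on `G` with values in `kˣ`. -/
def IsNormalized2Cocycle {k G : Type*} [Field k] [Group G] (α : G → G → kˣ) : Prop :=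
  (∀ g h l : G, α g h * α (g * h) l = α h l * α g (h * l)) ∧
  (∀ g : G, α g 1 = 1 ∧ α 1 g = 1)

/-- `θ_g(x,y) = β(g,x,y)·β(x,y,(xy)⁻¹g(xy)) / β(x,x⁻¹gx,y)`. -/
def ddTheta {k G : Type*} [Field k] [Group G] (β : G → G → G → kˣ) (g x y : G) : kˣ :=
  β g x y * β x y ((x * y)⁻¹ * g * (x * y)) / β x (x⁻¹ * g * x) y

/-- `γ_x(g₁,g₂) = β(g₁,g₂,x)·β(x,x⁻¹g₁x,x⁻¹g₂x) / β(g₁,x,x⁻¹g₂x)`. -/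
def ddGamma {k G : Type*} [Field k] [Group G] (β : G → G → G → kˣ) (x g1 g2 : G) : kˣ :=
  β g1 g2 x * β x (x⁻¹ * g1 * x) (x⁻¹ * g2 * x) / β g1 x (x⁻¹ * g2 * x)

/-- The trivial 3-cocycle. -/
def trivCocycle (k G : Type*) [Field k] [Group G] : G → G → G → kˣ := fun _ _ _ => 1

/-- The underlying `k`-vector space of the twisted Drinfel'd double `D^β(k[G])`:
the free `k`-module on the basis `⟨g,x⟩`, `(g,x) ∈ G × G`, realized as functions. -/
abbrev DD (k G : Type*) := G × G → k

/-- The function model for `D^β(k[G]) ⊗ D^β(k[G])`. -/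
abbrev DD2 (k G : Type*) := (G × G) × (G × G) → k

/-- The function model for the threefold tensor power of `D^β(k[G])`. -/
abbrev DD3 (k G : Type*) := (G × G) × (G × G) × (G × G) → k

/-- The basis element `⟨g,x⟩` of `D^β(k[G])`. -/
def ddBasis {k G : Type*} [Field k] [DecidableEq G] (g x : G) : DD k G :=
  fun p => if p = (g, x) then 1 else 0

/-- The multiplication of `D^β(k[G])`, the bilinear extension of
`⟨g,x⟩·⟨h,y⟩ = δ_{g,xhx⁻¹} θ_g(x,y) ⟨g,xy⟩`. -/
def ddMul {k G : Type*} [Field k] [Group G] [Fintype G]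
    (β : G → G → G → kˣ) (a b : DD k G) : DD k G :=
  fun p => ∑ x : G, a (p.1, x) * b (x⁻¹ * p.1 * x, x⁻¹ * p.2) * (ddTheta β p.1 x (x⁻¹ * p.2) : k)

/-- The identity `Σ_{h∈G} ⟨h,e⟩` of `D^β(k[G])`. -/
def ddOne (k G : Type*) [Field k] [Group G] [Fintype G] [DecidableEq G] : DD k G :=
  ∑ g : G, ddBasis g 1

/-- The elementary tensor `a ⊗ b` in the function model of `D^β(k[G]) ⊗ D^β(k[G])`. -/
def ddTensor {k G : Type*} [Field k] (a b : DD k G) : DD2 k G :=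
  fun p => a p.1 * b p.2

/-- The elementary tensor `a ⊗ b ⊗ c` in the function model of the triple tensor power. -/
def ddTensor3 {k G : Type*} [Field k] (a b c : DD k G) : DD3 k G :=
  fun p => a p.1 * b p.2.1 * c p.2.2

/-- Componentwise multiplication on `D^β(k[G]) ⊗ D^{β'}(k[G])` in the function model. -/
def dd2Mul {k G : Type*} [Field k] [Group G] [Fintype G]
    (β β' : G → G → G → kˣ) (a b : DD2 k G) : DD2 k G :=
  fun p => ∑ x : G, ∑ y : G,
    a ((p.1.1, x), (p.2.1, y)) *
      b ((x⁻¹ * p.1.1 * x, x⁻¹ * p.1.2), (y⁻¹ * p.2.1 * y, y⁻¹ * p.2.2)) *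
      (ddTheta β p.1.1 x (x⁻¹ * p.1.2) : k) * (ddTheta β' p.2.1 y (y⁻¹ * p.2.2) : k)

/-- Componentwise multiplication on the threefold tensor power of `D^β(k[G])`. -/
def dd3Mul {k G : Type*} [Field k] [Group G] [Fintype G]
    (β : G → G → G → kˣ) (a b : DD3 k G) : DD3 k G :=
  fun p => ∑ x : G, ∑ y : G, ∑ z : G,
    a ((p.1.1, x), (p.2.1.1, y), (p.2.2.1, z)) *
      b ((x⁻¹ * p.1.1 * x, x⁻¹ * p.1.2), (y⁻¹ * p.2.1.1 * y, y⁻¹ * p.2.1.2),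
        (z⁻¹ * p.2.2.1 * z, z⁻¹ * p.2.2.2)) *
      (ddTheta β p.1.1 x (x⁻¹ * p.1.2) : k) * (ddTheta β p.2.1.1 y (y⁻¹ * p.2.1.2) : k) *
      (ddTheta β p.2.2.1 z (z⁻¹ * p.2.2.2) : k)

/-- The comultiplication of `D^β(k[G])`: the linear extension of
`Δ(⟨g,x⟩) = Σ_{g₁g₂=g} γ_x(g₁,g₂) ⟨g₁,x⟩ ⊗ ⟨g₂,x⟩`. -/
def ddComul {k G : Type*} [Field k] [Group G] [DecidableEq G]
    (β : G → G → G → kˣ) (a : DD k G) : DD2 k G :=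
  fun p =>
    if p.1.2 = p.2.2 then (ddGamma β p.1.2 p.1.1 p.2.1 : k) * a (p.1.1 * p.2.1, p.1.2) else 0

/-- The map `id ⊗ Δ` from `D^β(k[G])^{⊗2}` to `D^β(k[G])^{⊗3}` in the function model. -/
def idTensorComul {k G : Type*} [Field k] [Group G] [DecidableEq G]
    (β : G → G → G → kˣ) (u : DD2 k G) : DD3 k G :=
  fun p => if p.2.1.2 = p.2.2.2 then
      (ddGamma β p.2.1.2 p.2.1.1 p.2.2.1 : k) * u (p.1, (p.2.1.1 * p.2.2.1, p.2.1.2))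
    else 0

/-- The map `Δ ⊗ id` from `D^β(k[G])^{⊗2}` to `D^β(k[G])^{⊗3}` in the function model. -/
def comulTensorId {k G : Type*} [Field k] [Group G] [DecidableEq G]
    (β : G → G → G → kˣ) (u : DD2 k G) : DD3 k G :=
  fun p => if p.1.2 = p.2.1.2 then
      (ddGamma β p.1.2 p.1.1 p.2.1.1 : k) * u ((p.1.1 * p.2.1.1, p.1.2), p.2.2)
    else 0

/-- The flip of the two tensor factors. -/
def ddSwap {k G : Type*} (u : DD2 k G) : DD2 k G := fun p => u (p.2, p.1)

/-- The counit `ε(⟨g,x⟩) = δ_{g,e}` of `D^β(k[G])`. -/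
def ddCounit {k G : Type*} [Field k] [Group G] [Fintype G] (a : DD k G) : k :=
  ∑ x : G, a (1, x)

/-- The injection `k[G]^* → D^β(k[G])`, `δ_g ↦ ⟨g,e⟩`. -/
def ddIota {k G : Type*} [Field k] [Group G] [DecidableEq G] (f : G → k) : DD k G :=
  fun p => if p.2 = 1 then f p.1 else 0

/-- The diagonal map `D^{ββ'}(k[G]) → D^β(k[G]) ⊗ D^{β'}(k[G])`, `⟨g,x⟩ ↦ ⟨g,x⟩ ⊗ ⟨g,x⟩`. -/
def ddDiag {k G : Type*} [Field k] [DecidableEq G] (a : DD k G) : DD2 k G :=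
  fun p => if p.1 = p.2 then a p.1 else 0

/-- The antipode of `D^β(k[G])`: the linear extension of
`S(⟨g,x⟩) = (θ_{g⁻¹}(x,x⁻¹)·γ_x(g,g⁻¹))⁻¹ ⟨x⁻¹g⁻¹x, x⁻¹⟩`. -/
def ddAntipode {k G : Type*} [Field k] [Group G] (β : G → G → G → kˣ) (a : DD k G) : DD k G :=
  fun p =>
    (((ddTheta β (p.2⁻¹ * p.1 * p.2) p.2⁻¹ p.2 *
        ddGamma β p.2⁻¹ (p.2⁻¹ * p.1⁻¹ * p.2) (p.2⁻¹ * p.1 * p.2))⁻¹ : kˣ) : k) *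
      a (p.2⁻¹ * p.1⁻¹ * p.2, p.2⁻¹)

/-- The antipode of the untwisted double `D(k[G])`: `S(⟨g,x⟩) = ⟨x⁻¹g⁻¹x, x⁻¹⟩`. -/
def ddAntipode0 {k G : Type*} [Field k] [Group G] (a : DD k G) : DD k G :=
  fun p => a (p.2⁻¹ * p.1⁻¹ * p.2, p.2⁻¹)

/-- The operator `φ(x)` on `D^β(k[G])^{comm}`: the linear extension of
`φ(x)(⟨h,y⟩) = (θ_{xhx⁻¹}(x,y)/θ_{xhx⁻¹}(xyx⁻¹,x))·⟨xhx⁻¹, xyx⁻¹⟩`. -/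
def ddPhi {k G : Type*} [Field k] [Group G] (β : G → G → G → kˣ) (x : G) (a : DD k G) :
    DD k G :=
  fun p => ((ddTheta β p.1 x (x⁻¹ * p.2 * x) / ddTheta β p.1 p.2 x : kˣ) : k) *
    a (x⁻¹ * p.1 * x, x⁻¹ * p.2 * x)

/-- The span of the basis elements `⟨g,x⟩` with `gx = xg`, i.e. `D^β(k[G])^{comm}`. -/
def ddCommSpan (k G : Type*) [Field k] [Group G] [DecidableEq G] : Submodule k (DD k G) :=
  Submodule.span k {v : DD k G | ∃ g x : G, g * x = x * g ∧ v = ddBasis g x}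

/-- The underlying space of the twisted group ring `k^α[G]`. -/
abbrev TG (k G : Type*) := G → k

/-- The basis element `1_g` of `k^α[G]`. -/
def tgBasis {k G : Type*} [Field k] [DecidableEq G] (g : G) : TG k G :=
  fun z => if z = g then 1 else 0

/-- The multiplication `1_g·1_h = α(g,h) 1_{gh}` of the twisted group ring `k^α[G]`. -/
def tgMul {k G : Type*} [Field k] [Group G] [Fintype G] (α : G → G → kˣ) (a b : TG k G) :
    TG k G :=
  fun z => ∑ x : G, a x * b (x⁻¹ * z) * (α x (x⁻¹ * z) : k)

/-- The identity `1_e` of `k^α[G]`. -/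
def tgOne (k G : Type*) [Field k] [Group G] [DecidableEq G] : TG k G := tgBasis 1

/-- The inverse `α(g,g⁻¹)⁻¹·1_{g⁻¹}` of the basis element `1_g` in `k^α[G]`. -/
def tgInvBasis {k G : Type*} [Field k] [Group G] [DecidableEq G] (α : G → G → kˣ) (g : G) :
    TG k G :=
  (((α g g⁻¹)⁻¹ : kˣ) : k) • tgBasis g⁻¹

/-- Conjugation `ρ(g)(a) = 1_g · a · (1_g)⁻¹` in the twisted group ring `k^α[G]`. -/
def tgConj {k G : Type*} [Field k] [Group G] [Fintype G] [DecidableEq G]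
    (α : G → G → kˣ) (g : G) (a : TG k G) : TG k G :=
  tgMul α (tgBasis g) (tgMul α a (tgInvBasis α g))

theorem comm_inv_left {G : Type*} [Group G] {g x : G} (h : x * g = g * x) :
    x⁻¹ * g = g * x⁻¹ := by
  rw [eq_mul_inv_iff_mul_eq, mul_assoc, ← h, ← mul_assoc, inv_mul_cancel, one_mul]

theorem comm_inv_mul {G : Type*} [Group G] {g x z : G} (hx : x * g = g * x)
    (hz : z * g = g * z) : (x⁻¹ * z) * g = g * (x⁻¹ * z) := by
  rw [mul_assoc, hz, ← mul_assoc, comm_inv_left hx, mul_assoc]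

/-- The index set `{(g,x) : x ∈ Z(g)}` of the direct sum `⊕_g k^{θ_g}[Z(g)]`. -/
abbrev CentPairs (G : Type*) [Group G] := Σ g : G, {x : G // x * g = g * x}

/-- The underlying space of `⊕_g k^{θ_g}[Z(g)]`. -/
abbrev TY (k G : Type*) [Group G] := CentPairs G → k

/-- The multiplication of `⊕_g k^{θ_g}[Z(g)]`: in the `g`-th summand,
`1_x·1_y = θ_g(x,y)·1_{xy}` for `x, y ∈ Z(g)`, and distinct summands multiply to `0`. -/
def tyMul {k G : Type*} [Field k] [Group G] [Fintype G] [DecidableEq G]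
    (β : G → G → G → kˣ) (a b : TY k G) : TY k G :=
  fun q => ∑ x : {x : G // x * q.1 = q.1 * x},
    a ⟨q.1, x⟩ * b ⟨q.1, ⟨(x : G)⁻¹ * (q.2 : G), comm_inv_mul x.2 q.2.2⟩⟩ *
      (ddTheta β q.1 (x : G) ((x : G)⁻¹ * (q.2 : G)) : k)

/-- The identity of `⊕_g k^{θ_g}[Z(g)]`. -/
def tyOne (k G : Type*) [Field k] [Group G] [DecidableEq G] : TY k G :=
  fun q => if (q.2 : G) = 1 then 1 else 0

/-- The map `⊕_g k^{θ_g}[Z(g)] → D^β(k[G])` sending `1_x` in the `g`-th summand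
to `⟨g,x⟩`. -/
def tyMap {k G : Type*} [Field k] [Group G] [DecidableEq G] (f : TY k G) : DD k G :=
  fun p => if h : p.2 * p.1 = p.1 * p.2 then f ⟨p.1, ⟨p.2, h⟩⟩ else 0

/-- The action of `D^{ββ'}(k[G])` on `A ⊗ B`, assigning to `⟨g,x⟩` the endomorphism
`ρ_A(⟨g,x⟩) ⊗ ρ_B(⟨g,x⟩)` and extending linearly. -/
noncomputable def ddTensorAction {k G A B : Type*} [Field k] [Group G] [Fintype G]
    [DecidableEq G] [AddCommGroup A] [Module k A] [AddCommGroup B] [Module k B]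
    (ρA : DD k G → (A →ₗ[k] A)) (ρB : DD k G → (B →ₗ[k] B)) (a : DD k G) :
    (A ⊗[k] B) →ₗ[k] (A ⊗[k] B) :=
  ∑ p : G × G, a p • TensorProduct.map (ρA (ddBasis p.1 p.2)) (ρB (ddBasis p.1 p.2))

section

variable {k G : Type*} [Field k] [Group G]

theorem ddTheta_one_left {β : G → G → G → kˣ} (hβ : IsNormalized3Cocycle β) (g y : G) :
    ddTheta β g 1 y = 1 := by
  simp [ddTheta, (hβ.2 _ _).1, (hβ.2 _ _).2.1]

theorem ddTheta_one_right {β : G → G → G → kˣ} (hβ : IsNormalized3Cocycle β) (g x : G) :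
    ddTheta β g x 1 = 1 := by
  simp [ddTheta, (hβ.2 _ _).2.1, (hβ.2 _ _).2.2]

theorem ddGamma_mul_ddGamma {β : G → G → G → kˣ} (hβ : IsNormalized3Cocycle β)
    (x g₁ g₂ g₃ : G) :
    β g₁ g₂ g₃ * ddGamma β x g₁ (g₂ * g₃) * ddGamma β x g₂ g₃ =
      ddGamma β x g₁ g₂ * ddGamma β x (g₁ * g₂) g₃ *
        β (x⁻¹ * g₁ * x) (x⁻¹ * g₂ * x) (x⁻¹ * g₃ * x) := by
  have conj_mul (g h : G) : x⁻¹ * (g * h) * x = (x⁻¹ * g * x) * (x⁻¹ * h * x) := by group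
  have mul_conj (g : G) : x * (x⁻¹ * g * x) = g * x := by group
  have h₁ := congrArg Units.val (hβ.1 g₁ g₂ g₃ x)
  have h₂ := congrArg Units.val (hβ.1 x (x⁻¹ * g₁ * x) (x⁻¹ * g₂ * x) (x⁻¹ * g₃ * x))
  have h₃ := congrArg Units.val (hβ.1 g₁ g₂ x (x⁻¹ * g₃ * x))
  have h₄ := congrArg Units.val (hβ.1 g₁ x (x⁻¹ * g₂ * x) (x⁻¹ * g₃ * x))
  simp only [ddGamma, conj_mul, Units.ext_iff, Units.val_mul, Units.val_div_eq_div_val]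
  simp only [mul_conj, Units.val_mul] at h₁ h₂ h₃ h₄
  field_simp
  set y₁ := x⁻¹ * g₁ * x
  set y₂ := x⁻¹ * g₂ * x
  set y₃ := x⁻¹ * g₃ * x
  -- rewriting the left side with h₁, h₃, h₄, h₂ in turn yields the right side
  linear_combination
    (β x y₁ (y₂ * y₃) * β x y₂ y₃ * β g₁ x y₂ * β (g₁ * g₂) x y₃ : k) * h₁ -
    (β (g₁ * g₂) g₃ x * β x y₁ (y₂ * y₃) * β x y₂ y₃ * β g₁ x y₂ : k) * h₃ +
    (β (g₁ * g₂) g₃ x * β x y₁ (y₂ * y₃) * β g₁ g₂ x * β g₂ x y₃ : k) * h₄ -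
    (β g₁ g₂ x * β (g₁ * g₂) g₃ x * β g₁ x (y₂ * y₃) * β g₂ x y₃ : k) * h₂

variable [DecidableEq G]

theorem idTensorComul_ddComul_apply (β : G → G → G → kˣ) (a : DD k G) (g₁ x₁ g₂ x₂ g₃ x₃ : G) :
    idTensorComul β (ddComul β a) ((g₁, x₁), (g₂, x₂), (g₃, x₃)) =
      if x₁ = x₂ ∧ x₂ = x₃ then
        (ddGamma β x₁ g₁ (g₂ * g₃) * ddGamma β x₁ g₂ g₃ : kˣ) * a (g₁ * g₂ * g₃, x₁)
      else 0 := by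
  by_cases h : x₁ = x₂ ∧ x₂ = x₃
  · obtain ⟨rfl, rfl⟩ := h
    simp [idTensorComul, ddComul, mul_assoc, mul_left_comm]
  · rw [if_neg h]
    grind [idTensorComul, ddComul]

theorem comulTensorId_ddComul_apply (β : G → G → G → kˣ) (a : DD k G) (g₁ x₁ g₂ x₂ g₃ x₃ : G) :
    comulTensorId β (ddComul β a) ((g₁, x₁), (g₂, x₂), (g₃, x₃)) =
      if x₁ = x₂ ∧ x₂ = x₃ then
        (ddGamma β x₁ g₁ g₂ * ddGamma β x₁ (g₁ * g₂) g₃ : kˣ) * a (g₁ * g₂ * g₃, x₁)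
      else 0 := by
  by_cases h : x₁ = x₂ ∧ x₂ = x₃
  · obtain ⟨rfl, rfl⟩ := h
    simp [comulTensorId, ddComul, mul_assoc]
  · rw [if_neg h]
    grind [comulTensorId, ddComul]

variable [Fintype G]

/-- The image of `f ∈ (k^G)^{⊗3}` under `ι ⊗ ι ⊗ ι`. -/
def ddIota3 (f : G → G → G → k) : DD3 k G :=
  ∑ g : G, ∑ h : G, ∑ l : G, f g h l • ddTensor3 (ddBasis g 1) (ddBasis h 1) (ddBasis l 1)

theorem ddIota3_apply (f : G → G → G → k) (g₁ x₁ g₂ x₂ g₃ x₃ : G) :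
    ddIota3 f ((g₁, x₁), (g₂, x₂), (g₃, x₃)) =
      if x₁ = 1 ∧ x₂ = 1 ∧ x₃ = 1 then f g₁ g₂ g₃ else 0 := by
  simp only [ddIota3, Finset.sum_apply, Pi.smul_apply, smul_eq_mul, ddTensor3, ddBasis,
    Prod.mk.injEq]
  by_cases h₁ : x₁ = 1 <;> by_cases h₂ : x₂ = 1 <;> by_cases h₃ : x₃ = 1 <;>
    simp [h₁, h₂, h₃]

theorem dd3Mul_ddIota3_left {β : G → G → G → kˣ} (hβ : IsNormalized3Cocycle β)
    (f : G → G → G → k) (u : DD3 k G) (g₁ x₁ g₂ x₂ g₃ x₃ : G) :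
    dd3Mul β (ddIota3 f) u ((g₁, x₁), (g₂, x₂), (g₃, x₃)) =
      f g₁ g₂ g₃ * u ((g₁, x₁), (g₂, x₂), (g₃, x₃)) := by
  simp [dd3Mul, ddIota3_apply, ddTheta_one_left hβ, ite_and]

theorem dd3Mul_ddIota3_right {β : G → G → G → kˣ} (hβ : IsNormalized3Cocycle β)
    (f : G → G → G → k) (u : DD3 k G) (g₁ x₁ g₂ x₂ g₃ x₃ : G) :
    dd3Mul β u (ddIota3 f) ((g₁, x₁), (g₂, x₂), (g₃, x₃)) =
      u ((g₁, x₁), (g₂, x₂), (g₃, x₃)) *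
        f (x₁⁻¹ * g₁ * x₁) (x₂⁻¹ * g₂ * x₂) (x₃⁻¹ * g₃ * x₃) := by
  simp [dd3Mul, ddIota3_apply, ddTheta_one_right hβ, ite_and, inv_mul_eq_one]

end

/-- `Δ` is quasi-coassociative with associator
`Φ = Σ β(g,h,l)⁻¹ ⟨g,e⟩⊗⟨h,e⟩⊗⟨l,e⟩`. -/
theorem stmt6 {k G : Type*} [Field k] [Group G] [Fintype G] [DecidableEq G]
    (β : G → G → G → kˣ) (hβ : IsNormalized3Cocycle β) :
    ∀ a : DD k G,
      dd3Mul β (idTensorComul β (ddComul β a))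
        (∑ g : G, ∑ h : G, ∑ l : G,
          (((β g h l)⁻¹ : kˣ) : k) • ddTensor3 (ddBasis g 1) (ddBasis h 1) (ddBasis l 1)) =
      dd3Mul β
        (∑ g : G, ∑ h : G, ∑ l : G,
          (((β g h l)⁻¹ : kˣ) : k) • ddTensor3 (ddBasis g 1) (ddBasis h 1) (ddBasis l 1))
        (comulTensorId β (ddComul β a)) := by
  intro a
  change dd3Mul β _ (ddIota3 fun g h l => (((β g h l)⁻¹ : kˣ) : k)) =
    dd3Mul β (ddIota3 fun g h l => (((β g h l)⁻¹ : kˣ) : k)) _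
  funext ⟨⟨g₁, x₁⟩, ⟨g₂, x₂⟩, ⟨g₃, x₃⟩⟩
  rw [dd3Mul_ddIota3_left hβ, dd3Mul_ddIota3_right hβ, idTensorComul_ddComul_apply,
    comulTensorId_ddComul_apply]
  split_ifs with hx
  · obtain ⟨rfl, rfl⟩ := hx
    have h := congrArg Units.val (ddGamma_mul_ddGamma hβ x₁ g₁ g₂ g₃)
    push_cast at h ⊢
    field_simp
    linear_combination a (g₁ * g₂ * g₃, x₁) * h
  · simp

end StringyOrbifold
end

section
/- Let k be a field, G a finite group, and β a normalized 3-cocycle on G with values in kˣ. For each g ∈ G let k^{θ_g}[Z(g)] denote the twisted group ring of the centralizer Z(g): the free k-module with basis {1_x : x ∈ Z(g)} and multiplication 1_x·1_y = θ_g(x,y)·1_{xy} (a unital associative k-algebra since θ_g restricts to a normalized 2-cocycle on Z(g)). Then the subalgebra D^β(k[G])^comm spanned by {⟨g,x⟩ : gx = xg} is isomorphic as a k-algebra to the direct product ⊕_{g∈G} k^{θ_g}[Z(g)], via the map sending the basis element 1_x of the g-th summand to ⟨g,x⟩; in particular ⟨g,x⟩·⟨g,y⟩ = θ_g(x,y)·⟨g,xy⟩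 for x,y ∈ Z(g), and ⟨g,x⟩·⟨h,y⟩ = 0 for g ≠ h with x ∈ Z(g), y ∈ Z(h). -/
/-! On a basis element `⟨g, x⟩` with `x ∈ Z(g)` the condition `g = x h x⁻¹` in the product of
`D^β(k[G])` becomes `g = h`, so `⟨g, x⟩·⟨h, y⟩ = δ_{g,h} θ_g(x, y) ⟨g, xy⟩`: the product of
`⊕_g k^{θ_g}[Z(g)]`. The span of these basis elements is closed under the product because `Z(g)`
is a subgroup: with `x ∈ Z(g)`, a term `⟨g, x⟩·⟨g, x⁻¹z⟩` can only be nonzero when `z ∈ Z(g)`. -/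

open scoped BigOperators TensorProduct

namespace StringyOrbifold

section TwistedDouble

variable {k G : Type*} [Field k] [Group G] [Fintype G] [DecidableEq G]

theorem ddMul_ddBasis (β : G → G → G → kˣ) (g h x y : G) :
    ddMul β (ddBasis g x) (ddBasis h y) =
      if x⁻¹ * g * x = h then (ddTheta β g x y : k) • ddBasis g (x * y) else 0 := by
  funext ⟨a, b⟩
  rw [ddMul, Finset.sum_eq_single x (fun z _ hz => by simp [ddBasis, hz]) (by simp)]
  simp only [ddBasis, Prod.mk.injEq, and_true, inv_mul_eq_iff_eq_mul]
  split_ifs <;> simp_all [ddBasis]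

theorem ddOne_apply (p : G × G) : ddOne k G p = if p.2 = 1 then 1 else 0 := by
  simp only [ddOne, ddBasis, Finset.sum_apply, Prod.ext_iff]
  split_ifs <;> simp_all

end TwistedDouble

section CentralizerEmbedding

variable {k G : Type*} [Field k] [Group G] [DecidableEq G]

theorem tyMap_apply_of_commute (f : TY k G) {g x : G} (h : Commute x g) :
    tyMap f (g, x) = f ⟨g, ⟨x, h⟩⟩ :=
  dif_pos h

theorem tyMap_apply_of_not_commute (f : TY k G) {g x : G} (h : ¬Commute x g) :
    tyMap f (g, x) = 0 :=
  dif_neg h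

theorem tyMap_injective : Function.Injective (tyMap (k := k) (G := G)) := by
  intro f f' hff
  funext ⟨g, x, hx⟩
  simpa only [tyMap_apply_of_commute _ hx] using congrFun hff (g, x)

def tyMapₗ (k G : Type*) [Field k] [Group G] [DecidableEq G] : TY k G →ₗ[k] DD k G where
  toFun := tyMap
  map_add' f f' := by
    funext ⟨g, x⟩
    by_cases hx : Commute x g <;> simp [tyMap_apply_of_commute, tyMap_apply_of_not_commute, hx]
  map_smul' c f := by
    funext ⟨g, x⟩
    by_cases hx : Commute x g <;> simp [tyMap_apply_of_commute, tyMap_apply_of_not_commute, hx]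

theorem tyMapₗ_apply (f : TY k G) : tyMapₗ k G f = tyMap f :=
  rfl

theorem tyMap_single (q : CentPairs G) :
    tyMap (Pi.single q (1 : k)) = ddBasis q.1 (q.2 : G) := by
  funext ⟨g, x⟩
  by_cases hx : Commute x g
  · obtain ⟨g', x', hx'⟩ := q
    rw [tyMap_apply_of_commute _ hx, Pi.single_apply, ddBasis]
    by_cases hg : g = g'
    · subst hg
      simp [Subtype.ext_iff]
    · simp [hg]
  · rw [tyMap_apply_of_not_commute _ hx, ddBasis, if_neg]
    rintro ⟨⟩
    exact hx q.2.2

variable [Fintype G]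

theorem range_tyMapₗ : LinearMap.range (tyMapₗ k G) = ddCommSpan k G := by
  rw [LinearMap.range_eq_map, ← (Pi.basisFun k (CentPairs G)).span_eq, Submodule.map_span,
    ddCommSpan, ← Set.range_comp]
  congr 1
  ext v
  simp only [Set.mem_range, Function.comp_apply, Pi.basisFun_apply, tyMapₗ_apply, tyMap_single,
    Sigma.exists, Subtype.exists, Set.mem_ofPred_eq]
  exact ⟨fun ⟨g, x, h, hv⟩ => ⟨g, x, h.symm, hv.symm⟩, fun ⟨g, x, h, hv⟩ => ⟨g, x, h.symm, hv.symm⟩⟩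

theorem tyMap_tyOne : tyMap (tyOne k G) = ddOne k G := by
  funext ⟨g, x⟩
  rw [ddOne_apply]
  by_cases hx : Commute x g
  · rw [tyMap_apply_of_commute _ hx]; rfl
  · rw [tyMap_apply_of_not_commute _ hx, if_neg]
    rintro rfl
    exact hx (Commute.one_left g)

theorem tyMap_tyMul (β : G → G → G → kˣ) (f f' : TY k G) :
    tyMap (tyMul β f f') = ddMul β (tyMap f) (tyMap f') := by
  funext ⟨g, z⟩
  by_cases hz : Commute z g
  · rw [tyMap_apply_of_commute _ hz, tyMul, ddMul]
    refine Fintype.sum_of_injective Subtype.val Subtype.val_injective _ _ ?_ ?_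
    · intro x hx
      simp only [Set.mem_range, Subtype.exists, exists_prop, exists_eq_right] at hx
      rw [tyMap_apply_of_not_commute f hx, zero_mul, zero_mul]
    · intro x
      rw [tyMap_apply_of_commute f x.2, Commute.inv_mul_cancel x.2,
        tyMap_apply_of_commute f' (comm_inv_mul x.2 hz)]
  · rw [tyMap_apply_of_not_commute _ hz, ddMul, eq_comm]
    refine Finset.sum_eq_zero fun x _ => ?_
    by_cases hx : Commute x g
    · have : ¬Commute (x⁻¹ * z) g := fun h => hz (by simpa using hx.mul_left h)
      rw [hx.inv_mul_cancel, tyMap_apply_of_not_commute f' this, mul_zero, zero_mul]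
    · rw [tyMap_apply_of_not_commute f hx, zero_mul, zero_mul]

end CentralizerEmbedding

theorem stmt13_general {k G : Type*} [Field k] [Group G] [Fintype G] [DecidableEq G]
    (β : G → G → G → kˣ) :
    (∀ f f' : TY k G, tyMap (f + f') = tyMap f + tyMap f') ∧
    (∀ (c : k) (f : TY k G), tyMap (c • f) = c • tyMap f) ∧
    Function.Injective (tyMap (k := k) (G := G)) ∧
    tyMap (tyOne k G) = ddOne k G ∧
    (∀ f f' : TY k G, tyMap (tyMul β f f') = ddMul β (tyMap f) (tyMap f')) ∧
    Set.range (tyMap (k := k) (G := G)) = (ddCommSpan k G : Set (DD k G)) ∧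
    (∀ (g x : G) (h : x * g = g * x),
      tyMap (fun q => if q = (⟨g, ⟨x, h⟩⟩ : CentPairs G) then (1 : k) else 0)
        = ddBasis g x) ∧
    (∀ g x y : G, x * g = g * x → y * g = g * y →
      ddMul β (ddBasis g x) (ddBasis g y) = (ddTheta β g x y : k) • ddBasis g (x * y)) ∧
    (∀ g h x y : G, g ≠ h → x * g = g * x → y * h = h * y →
      ddMul β (ddBasis g x) (ddBasis h y) = 0) := by
  refine ⟨(tyMapₗ k G).map_add, (tyMapₗ k G).map_smul, tyMap_injective, tyMap_tyOne,
    tyMap_tyMul β, ?_, ?_, ?_, ?_⟩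
  · rw [← range_tyMapₗ, LinearMap.coe_range]
    rfl
  · intro g x h
    convert tyMap_single (k := k) ⟨g, ⟨x, h⟩⟩ using 2
    funext q
    exact (Pi.single_apply _ _ q).symm
  · intro g x y hx _
    rw [ddMul_ddBasis, if_pos (Commute.inv_mul_cancel hx)]
  · intro g h x y hgh hx _
    rw [ddMul_ddBasis, if_neg (by rwa [Commute.inv_mul_cancel hx])]

/-- `D^β(k[G])^{comm} ≅ ⊕_{g} k^{θ_g}[Z(g)]` as `k`-algebras, via
`1_x` (in the `g`-th summand) `↦ ⟨g,x⟩`. -/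
theorem stmt13 {k G : Type*} [Field k] [Group G] [Fintype G] [DecidableEq G]
    (β : G → G → G → kˣ) (hβ : IsNormalized3Cocycle β) :
    (∀ f f' : TY k G, tyMap (f + f') = tyMap f + tyMap f') ∧
    (∀ (c : k) (f : TY k G), tyMap (c • f) = c • tyMap f) ∧
    Function.Injective (tyMap (k := k) (G := G)) ∧
    tyMap (tyOne k G) = ddOne k G ∧
    (∀ f f' : TY k G, tyMap (tyMul β f f') = ddMul β (tyMap f) (tyMap f')) ∧
    Set.range (tyMap (k := k) (G := G)) = (ddCommSpan k G : Set (DD k G)) ∧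
    (∀ (g x : G) (h : x * g = g * x),
      tyMap (fun q => if q = (⟨g, ⟨x, h⟩⟩ : CentPairs G) then (1 : k) else 0)
        = ddBasis g x) ∧
    (∀ g x y : G, x * g = g * x → y * g = g * y →
      ddMul β (ddBasis g x) (ddBasis g y) = (ddTheta β g x y : k) • ddBasis g (x * y)) ∧
    (∀ g h x y : G, g ≠ h → x * g = g * x → y * h = h * y →
      ddMul β (ddBasis g x) (ddBasis h y) = 0) :=
  stmt13_general β

end StringyOrbifold
end
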